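/- Let P be a Pellian polynomial of even degree d ≥ 1, and let a ∈ [0,1] satisfy a ≤ sin(π/(2d)). Then |P(a)| ≥ |T_d(a)|. -/

import Mathlib

/-!
A Pellian `P` of even degree `d = 2m` is even, so its partner `Q` is odd, and comparing degrees in
`P P̄ + (1 - x²) Q Q̄ = 1` gives `deg Q < d`. An odd polynomial of degree `< 2m` is recovered from
its values at the `m` positive zeros `v_j` of `T_d` by odd Lagrange interpolation,
`Q(a) = ∑ Q(v_j) w_j(a)`, and the same formula holds for `U_{d-1}`. At the nodes the Pell identity
gives `|Q(v_j)| ≤ 1 / √(1 - v_j²) = |U_{d-1}(v_j)|`, and for `0 ≤ a ≤ sin (π / 2d)`, the smallest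
node, the terms `U_{d-1}(v_j) w_j(a)` all have the same sign. Hence `|Q(a)| ≤ |U_{d-1}(a)|`, and
`T_d(a)² + (1 - a²) U_{d-1}(a)² = 1 = |P(a)|² + (1 - a²) |Q(a)|²` turns this into the claim.
-/

/-- A polynomial over `ℂ` is an even function. -/
def IsEvenPoly (P : Polynomial ℂ) : Prop := ∀ x : ℂ, P.eval (-x) = P.eval x

/-- A polynomial over `ℂ` is an odd function. -/
def IsOddPoly (P : Polynomial ℂ) : Prop := ∀ x : ℂ, P.eval (-x) = -P.eval x

/-- `P, Q ∈ ℂ[x]` form a Pell pair: fixed and opposite parity, and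
`|P(x)|² + (1 - x²)|Q(x)|² = 1` on `[-1,1]`. -/
def PellPair (P Q : Polynomial ℂ) : Prop :=
  ((IsEvenPoly P ∧ IsOddPoly Q) ∨ (IsOddPoly P ∧ IsEvenPoly Q)) ∧
    ∀ x : ℝ, x ∈ Set.Icc (-1 : ℝ) 1 →
      ‖P.eval (x : ℂ)‖ ^ 2 + (1 - x ^ 2) * ‖Q.eval (x : ℂ)‖ ^ 2 = 1

/-- A polynomial is Pellian if it is the first member of some Pell pair. -/
def Pellian (P : Polynomial ℂ) : Prop := ∃ Q : Polynomial ℂ, PellPair P Q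

open Polynomial Finset Real

theorem IsOddPoly.odd_natDegree {P : ℂ[X]} (hP : IsOddPoly P) (h0 : P ≠ 0) : Odd P.natDegree := by
  have hcomp : P.comp (-X) = -P := Polynomial.funext fun x => by simp [hP x]
  have hlc := P.comp_neg_X_leadingCoeff_eq
  rw [hcomp, leadingCoeff_neg] at hlc
  refine Nat.not_even_iff_odd.mp fun heven => leadingCoeff_ne_zero.mpr h0 ?_
  rw [heven.neg_one_pow, one_mul] at hlc
  linear_combination -hlc / 2

theorem PellPair.isOddPoly_right {P Q : ℂ[X]} (h : PellPair P Q) (heven : Even P.natDegree)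
    (hpos : P.natDegree ≠ 0) : IsOddPoly Q := by
  rcases h.1 with ⟨-, hQ⟩ | ⟨hP, -⟩
  · exact hQ
  · exact absurd (hP.odd_natDegree (by rintro rfl; simp at hpos)) (Nat.not_odd_iff_even.mpr heven)

theorem PellPair.mul_map_conj_add_eq_one {P Q : ℂ[X]} (h : PellPair P Q) :
    P * P.map (starRingEnd ℂ) + (1 - X ^ 2) * (Q * Q.map (starRingEnd ℂ)) = 1 := by
  have hconj (F : ℂ[X]) (x : ℝ) : F.eval (x : ℂ) * (F.map (starRingEnd ℂ)).eval (x : ℂ) =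
      ((‖F.eval (x : ℂ)‖ ^ 2 : ℝ) : ℂ) := by
    have hmap : (F.map (starRingEnd ℂ)).eval (x : ℂ) = starRingEnd ℂ (F.eval (x : ℂ)) := by
      simpa using eval_map_apply (p := F) (f := starRingEnd ℂ) (x : ℂ)
    rw [hmap, Complex.mul_conj, Complex.normSq_eq_norm_sq]
  refine eq_of_infinite_eval_eq _ _ (((Set.Icc_infinite (by norm_num : (-1 : ℝ) < 1)).image
    Complex.ofReal_injective.injOn).mono ?_)
  rintro _ ⟨x, hx, rfl⟩
  have := congrArg Complex.ofReal (h.2 x hx)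
  simp only [Set.mem_ofPred_eq, eval_add, eval_mul, eval_sub, eval_one, eval_pow, eval_X, hconj]
  push_cast at this ⊢
  linear_combination this

theorem PellPair.natDegree_lt {P Q : ℂ[X]} (h : PellPair P Q) (hpos : P.natDegree ≠ 0) :
    Q.natDegree < P.natDegree := by
  rcases eq_or_ne Q 0 with rfl | hQ
  · simpa using Nat.pos_of_ne_zero hpos
  have hQc : Q.map (starRingEnd ℂ) ≠ 0 := (Polynomial.map_ne_zero_iff (RingHom.injective _)).2 hQ
  have hX : (X ^ 2 - 1 : ℂ[X]).natDegree = 2 := by compute_degree!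
  have hid : (X ^ 2 - 1) * (Q * Q.map (starRingEnd ℂ)) = P * P.map (starRingEnd ℂ) - 1 := by
    linear_combination -h.mul_map_conj_add_eq_one
  have hdeg : 2 + 2 * Q.natDegree ≤ 2 * P.natDegree := by
    calc 2 + 2 * Q.natDegree = ((X ^ 2 - 1) * (Q * Q.map (starRingEnd ℂ))).natDegree := by
          rw [natDegree_mul (by rintro h0; simp [h0] at hX) (mul_ne_zero hQ hQc),
            natDegree_mul hQ hQc, natDegree_map, hX]
          ring
      _ ≤ 2 * P.natDegree := by
          rw [hid]
          refine (natDegree_sub_le _ _).trans ?_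
          simp only [natDegree_one]
          exact max_le (natDegree_mul_le.trans (by rw [natDegree_map, two_mul])) (Nat.zero_le _)
  omega

section OddInterpolation

variable {K ι : Type*} [Field K] [DecidableEq ι]

noncomputable def oddLagrangeWeight (s : Finset ι) (v : ι → K) (a : K) (i : ι) : K :=
  a / v i * ∏ k ∈ s.erase i, (a ^ 2 - v k ^ 2) / (v i ^ 2 - v k ^ 2)

theorem map_oddLagrangeWeight {L : Type*} [Field L] (f : K →+* L) (s : Finset ι) (v : ι → K)
    (a : K) (i : ι) :
    f (oddLagrangeWeight s v a i) = oddLagrangeWeight s (fun k => f (v k)) (f a) i := by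
  simp [oddLagrangeWeight, map_prod]

theorem eval_eq_sum_mul_oddLagrangeWeight [NeZero (2 : K)] {s : Finset ι} {v : ι → K}
    (hvs : Set.InjOn (fun i => v i ^ 2) s) (hv0 : ∀ i ∈ s, v i ≠ 0) {F : K[X]}
    (hodd : ∀ x, F.eval (-x) = -F.eval x) (hdeg : F.natDegree < 2 * #s) (a : K) :
    F.eval a = ∑ i ∈ s, F.eval (v i) * oddLagrangeWeight s v a i := by
  -- `x * R (x ^ 2)` is odd and agrees with `F` at the `2 * #s` points `± v i`.
  set R := Lagrange.interpolate s (fun i => v i ^ 2) (fun i => F.eval (v i) / v i) with hR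
  have hG : ∀ x, (X * R.comp (X ^ 2)).eval x = x * R.eval (x ^ 2) := by simp
  have hnode : ∀ i ∈ s, v i * R.eval (v i ^ 2) = F.eval (v i) := fun i hi => by
    rw [Lagrange.eval_interpolate_at_node _ hvs hi, mul_div_cancel₀ _ (hv0 i hi)]
  have hvs' : Set.InjOn (Sum.elim v (fun i => -v i)) (s.disjSum s) := by
    have hsq : ∀ i ∈ s, ∀ j ∈ s, v i ^ 2 = v j ^ 2 → i = j := fun i hi j hj h => hvs hi hj h
    have hneg : ∀ i ∈ s, v i ≠ -v i := fun i hi h =>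
      hv0 i hi ((mul_eq_zero.mp (by linear_combination h : (2 : K) * v i = 0)).resolve_left
        two_ne_zero)
    rintro (i | i) hi (j | j) hj h <;>
      simp only [Finset.mem_coe, inl_mem_disjSum, inr_mem_disjSum, Sum.elim_inl, Sum.elim_inr,
        Sum.inl.injEq, Sum.inr.injEq, reduceCtorEq] at hi hj h ⊢
    · exact hsq i hi j hj (by rw [h])
    · obtain rfl := hsq i hi j hj (by rw [h, neg_sq])
      exact hneg i hi h
    · obtain rfl := hsq i hi j hj (by rw [← h, neg_sq])
      exact hneg i hi h.symm
    · exact hsq i hi j hj (by rw [← neg_sq, h, neg_sq])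
  have hRdeg : R.natDegree ≤ #s - 1 :=
    natDegree_le_of_degree_le (Lagrange.degree_interpolate_le _ hvs)
  have hGdeg : (X * R.comp (X ^ 2)).natDegree < 2 * #s := by
    calc (X * R.comp (X ^ 2)).natDegree ≤ 1 + R.natDegree * 2 := by
          refine natDegree_mul_le.trans (add_le_add natDegree_X_le ?_)
          exact natDegree_comp_le.trans (by simp)
      _ < 2 * #s := by omega
  have hF : F = X * R.comp (X ^ 2) := by
    refine eq_of_degree_sub_lt_of_eval_index_eq _ hvs' ?_ ?_
    · rw [card_disjSum, ← two_mul]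
      exact degree_le_natDegree.trans_lt
        (by exact_mod_cast (natDegree_sub_le _ _).trans_lt (max_lt hdeg hGdeg))
    · rintro (i | i) hi <;> simp only [inl_mem_disjSum, inr_mem_disjSum] at hi <;>
        simp [hG, hnode, hodd, hi]
  calc F.eval a = a * R.eval (a ^ 2) := by rw [← hG, ← hF]
    _ = _ := by
      rw [hR, Lagrange.interpolate_apply, eval_finsetSum, mul_sum]
      refine sum_congr rfl fun i _ => ?_
      simp [oddLagrangeWeight, Lagrange.basis, Lagrange.basisDivisor, eval_prod, div_eq_inv_mul]
      ring

end OddInterpolation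

theorem neg_one_pow_mul_prod_div_nonneg {y : ℕ → ℝ} {m i : ℕ} {t : ℝ}
    (hy : StrictMonoOn y (range m)) (ht : ∀ k ∈ range m, t ≤ y k) (hi : i ∈ range m) :
    0 ≤ (-1) ^ i * ∏ k ∈ (range m).erase i, (t - y k) / (y i - y k) := by
  have hsplit : (range m).erase i = range i ∪ Ioo i m := by
    ext k; simp only [mem_range] at hi; simp only [mem_erase, mem_range, mem_union, mem_Ioo]; omega
  have hdisj : Disjoint (range i) (Ioo i m) := disjoint_left.2 fun k hk hk' => by
    simp only [mem_range, mem_Ioo] at hk hk'; omega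
  have hleft : ∀ k ∈ range i, 0 ≤ -((t - y k) / (y i - y k)) := fun k hk => by
    have hk' : k ∈ range m := mem_range.2 ((mem_range.1 hk).trans (mem_range.1 hi))
    exact neg_nonneg.2 (div_nonpos_of_nonpos_of_nonneg (sub_nonpos.2 (ht k hk'))
      (sub_pos.2 (hy hk' hi (mem_range.1 hk))).le)
  have hright : ∀ k ∈ Ioo i m, 0 ≤ (t - y k) / (y i - y k) := fun k hk => by
    have hk' : k ∈ range m := mem_range.2 (mem_Ioo.1 hk).2
    exact div_nonneg_of_nonpos (sub_nonpos.2 (ht k hk'))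
      (sub_nonpos.2 (hy hi hk' (mem_Ioo.1 hk).1).le)
  calc 0 ≤ (∏ k ∈ range i, -((t - y k) / (y i - y k))) * ∏ k ∈ Ioo i m, (t - y k) / (y i - y k) :=
        mul_nonneg (prod_nonneg hleft) (prod_nonneg hright)
    _ = _ := by rw [hsplit, prod_union hdisj, prod_neg, card_range, mul_assoc]

theorem neg_one_pow_mul_oddLagrangeWeight_nonneg {v : ℕ → ℝ} {m i : ℕ} {a : ℝ}
    (hv : StrictMonoOn v (range m)) (ha : 0 ≤ a) (hav : ∀ k ∈ range m, a ≤ v k)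
    (hi : i ∈ range m) : 0 ≤ (-1) ^ i * oddLagrangeWeight (range m) v a i := by
  have hsq : StrictMonoOn (fun k => v k ^ 2) (range m) := fun j hj k hk hjk =>
    pow_lt_pow_left₀ (hv hj hk hjk) (ha.trans (hav j hj)) two_ne_zero
  rw [oddLagrangeWeight, mul_left_comm]
  exact mul_nonneg (div_nonneg ha (ha.trans (hav i hi)))
    (neg_one_pow_mul_prod_div_nonneg hsq (fun k hk => pow_le_pow_left₀ ha (hav k hk) 2) hi)

theorem norm_sum_smul_le_sum_mul {ι E : Type*} [SeminormedAddCommGroup E] [NormedSpace ℝ E]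
    {s : Finset ι} {f : ι → E} {g w : ι → ℝ} (hfg : ∀ i ∈ s, ‖f i‖ ≤ |g i|)
    (hgw : ∀ i ∈ s, 0 ≤ g i * w i) : ‖∑ i ∈ s, w i • f i‖ ≤ ∑ i ∈ s, g i * w i :=
  calc ‖∑ i ∈ s, w i • f i‖ ≤ ∑ i ∈ s, ‖w i • f i‖ := norm_sum_le _ _
    _ ≤ ∑ i ∈ s, |g i * w i| := sum_le_sum fun i hi => by
        rw [norm_smul, Real.norm_eq_abs, abs_mul, mul_comm]
        exact mul_le_mul_of_nonneg_right (hfg i hi) (abs_nonneg _)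
    _ = ∑ i ∈ s, g i * w i := sum_congr rfl fun i hi => abs_of_nonneg (hgw i hi)

theorem Polynomial.Chebyshev.eval_T_sq_add_one_sub_sq_mul_eval_U_sq (n : ℤ) {x : ℝ}
    (hx : x ∈ Set.Icc (-1) 1) :
    (T ℝ n).eval x ^ 2 + (1 - x ^ 2) * (U ℝ (n - 1)).eval x ^ 2 = 1 := by
  obtain ⟨θ, rfl⟩ : ∃ θ, cos θ = x := ⟨arccos x, cos_arccos hx.1 hx.2⟩
  have hU := U_real_cos θ (n - 1)
  rw [show ((n - 1 : ℤ) : ℝ) + 1 = n by push_cast; ring] at hU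
  rw [T_real_cos]
  linear_combination (sin θ * (U ℝ (n - 1)).eval (cos θ) + sin (n * θ)) * hU +
    sin_sq_add_cos_sq (n * θ) - (U ℝ (n - 1)).eval (cos θ) ^ 2 * sin_sq_add_cos_sq θ

theorem Polynomial.Chebyshev.eval_U_two_mul_sub_one_neg {R : Type*} [CommRing R] (m : ℕ) (x : R) :
    (U R (2 * m - 1)).eval (-x) = -(U R (2 * m - 1)).eval x := by
  rcases m with _ | m
  · simp
  · rw [show (2 * ((m + 1 : ℕ) : ℤ) - 1) = ((2 * m + 1 : ℕ) : ℤ) by push_cast; ring, U_eval_neg,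
      Int.negOnePow_odd _ ⟨m, by push_cast; ring⟩]
    simp

-- `sin (nodeAngle m j)` for `j < m` are the positive zeros of `T_{2m}`, in increasing order.
noncomputable def nodeAngle (m j : ℕ) : ℝ := (2 * j + 1) * π / (4 * m)

section nodeAngle

variable {m j : ℕ}

theorem nodeAngle_pos (hj : j < m) : 0 < nodeAngle m j := by
  have : 0 < m := by omega
  unfold nodeAngle; positivity

theorem nodeAngle_lt_pi_div_two (hj : j < m) : nodeAngle m j < π / 2 := by
  have hm : (0 : ℝ) < m := by exact_mod_cast (show 0 < m by omega)
  have hjm : (2 * j + 1 : ℝ) < 2 * m := by exact_mod_cast (show 2 * j + 1 < 2 * m by omega)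
  rw [nodeAngle, div_lt_iff₀ (by positivity)]
  nlinarith [pi_pos]

theorem sin_nodeAngle_pos (hj : j < m) : 0 < sin (nodeAngle m j) :=
  sin_pos_of_pos_of_lt_pi (nodeAngle_pos hj) (by linarith [nodeAngle_lt_pi_div_two hj, pi_pos])

theorem cos_nodeAngle_pos (hj : j < m) : 0 < cos (nodeAngle m j) :=
  cos_pos_of_mem_Ioo ⟨by linarith [pi_pos, nodeAngle_pos hj], nodeAngle_lt_pi_div_two hj⟩

theorem strictMonoOn_sin_nodeAngle : StrictMonoOn (fun j => sin (nodeAngle m j)) (range m) := by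
  intro i hi j hj hij
  have hi := mem_range.1 hi; have hj := mem_range.1 hj
  refine strictMonoOn_sin ⟨by linarith [pi_pos, nodeAngle_pos hi], (nodeAngle_lt_pi_div_two hi).le⟩
    ⟨by linarith [pi_pos, nodeAngle_pos hj], (nodeAngle_lt_pi_div_two hj).le⟩ ?_
  have hm : (0 : ℝ) < m := by exact_mod_cast (show 0 < m by omega)
  unfold nodeAngle
  gcongr

theorem neg_one_pow_mul_eval_U_sin_nodeAngle (hj : j < m) :
    (-1) ^ (m - 1 - j) * (Chebyshev.U ℝ (2 * m - 1)).eval (sin (nodeAngle m j)) =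
      (cos (nodeAngle m j))⁻¹ := by
  have hU := Chebyshev.U_real_cos (π / 2 - nodeAngle m j) (2 * m - 1)
  rw [cos_pi_div_two_sub, sin_pi_div_two_sub,
    show ((2 * m - 1 : ℤ) : ℝ) + 1 = 2 * m by push_cast; ring] at hU
  obtain ⟨k, rfl⟩ : ∃ k, m = j + k + 1 := ⟨m - j - 1, by omega⟩
  have harg : 2 * ((j + k + 1 : ℕ) : ℝ) * (π / 2 - nodeAngle (j + k + 1) j) = k * π + π / 2 := by
    unfold nodeAngle; push_cast; field_simp; ring
  rw [harg, sin_add_pi_div_two, cos_nat_mul_pi] at hU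
  rw [show j + k + 1 - 1 - j = k by omega]
  refine eq_inv_of_mul_eq_one_left ?_
  rw [mul_assoc, hU, ← pow_add, ← two_mul, pow_mul, neg_one_sq, one_pow]

theorem norm_eval_sin_nodeAngle_le {Q : ℂ[X]}
    (hbound : ∀ x ∈ Set.Icc (-1 : ℝ) 1, (1 - x ^ 2) * ‖Q.eval (x : ℂ)‖ ^ 2 ≤ 1) (hj : j < m) :
    ‖Q.eval (sin (nodeAngle m j) : ℂ)‖ ≤
      |(Chebyshev.U ℝ (2 * m - 1)).eval (sin (nodeAngle m j))| := by
  have hc := cos_nodeAngle_pos hj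
  have hUj := congrArg abs (neg_one_pow_mul_eval_U_sin_nodeAngle hj)
  rw [abs_mul, abs_neg_one_pow, one_mul, abs_of_pos (inv_pos.2 hc)] at hUj
  rw [hUj, ← one_div, le_div_iff₀ hc]
  have hb := hbound _ ⟨by linarith [sin_nodeAngle_pos hj], sin_le_one _⟩
  rw [← cos_sq'] at hb
  exact (sq_le_one_iff₀ (by positivity)).1 (by rw [mul_pow]; linarith)

theorem le_sin_nodeAngle {a : ℝ} (ha : a ≤ sin (π / (4 * m))) (hj : j < m) :
    a ≤ sin (nodeAngle m j) :=
  ha.trans <| by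
    simpa [nodeAngle] using strictMonoOn_sin_nodeAngle.monotoneOn
      (mem_range.2 (by omega : 0 < m)) (mem_range.2 hj) (Nat.zero_le j)

theorem neg_one_pow_mul_eval_U_mul_oddLagrangeWeight_nonneg {a : ℝ} (ha : 0 ≤ a)
    (ha' : a ≤ sin (π / (4 * m))) (hj : j < m) :
    0 ≤ (-1) ^ (m - 1) * (Chebyshev.U ℝ (2 * m - 1)).eval (sin (nodeAngle m j)) *
      oddLagrangeWeight (range m) (fun k => sin (nodeAngle m k)) a j := by
  rw [show m - 1 = (m - 1 - j) + j by omega, pow_add,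
    show ∀ a b c d : ℝ, a * b * c * d = (a * c) * (b * d) from fun _ _ _ _ => by ring,
    neg_one_pow_mul_eval_U_sin_nodeAngle hj]
  exact mul_nonneg (inv_pos.2 (cos_nodeAngle_pos hj)).le
    (neg_one_pow_mul_oddLagrangeWeight_nonneg strictMonoOn_sin_nodeAngle ha
      (fun k hk => le_sin_nodeAngle ha' (mem_range.1 hk)) (mem_range.2 hj))

end nodeAngle

theorem norm_eval_le_abs_eval_U_of_isOddPoly {Q : ℂ[X]} {m : ℕ} (hQ : IsOddPoly Q)
    (hdeg : Q.natDegree < 2 * m)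
    (hbound : ∀ x ∈ Set.Icc (-1 : ℝ) 1, (1 - x ^ 2) * ‖Q.eval (x : ℂ)‖ ^ 2 ≤ 1)
    {a : ℝ} (ha : 0 ≤ a) (ha' : a ≤ sin (π / (4 * m))) :
    ‖Q.eval (a : ℂ)‖ ≤ |(Chebyshev.U ℝ (2 * m - 1)).eval a| := by
  set U := Chebyshev.U ℝ (2 * m - 1)
  set v : ℕ → ℝ := fun j => sin (nodeAngle m j)
  set w := oddLagrangeWeight (range m) v a
  have hv0 : ∀ j ∈ range m, v j ≠ 0 := fun j hj => (sin_nodeAngle_pos (mem_range.1 hj)).ne'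
  have hinj : Set.InjOn (fun j => v j ^ 2) (range m) := fun i hi j hj h =>
    strictMonoOn_sin_nodeAngle.injOn hi hj <| (sq_eq_sq₀ (sin_nodeAngle_pos (mem_range.1 hi)).le
      (sin_nodeAngle_pos (mem_range.1 hj)).le).1 h
  have hUdeg : U.natDegree < 2 * m := by rw [Chebyshev.natDegree_U]; omega
  calc ‖Q.eval (a : ℂ)‖ = ‖∑ j ∈ range m, w j • Q.eval (v j : ℂ)‖ := by
        rw [eval_eq_sum_mul_oddLagrangeWeight (v := fun j => (v j : ℂ))
          (fun i hi j hj h => hinj hi hj (Complex.ofReal_injective (by push_cast; exact h)))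
          (fun j hj => Complex.ofReal_ne_zero.2 (hv0 j hj)) hQ (by simpa using hdeg)]
        congr 1
        refine sum_congr rfl fun j _ => ?_
        rw [Complex.real_smul, mul_comm]
        exact congrArg (· * Q.eval (v j : ℂ)) (map_oddLagrangeWeight Complex.ofRealHom _ v a j).symm
    _ ≤ ∑ j ∈ range m, (-1) ^ (m - 1) * U.eval (v j) * w j := by
        refine norm_sum_smul_le_sum_mul (fun j hj => ?_) (fun j hj =>
          neg_one_pow_mul_eval_U_mul_oddLagrangeWeight_nonneg ha ha' (mem_range.1 hj))
        rw [abs_mul, abs_neg_one_pow, one_mul]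
        exact norm_eval_sin_nodeAngle_le hbound (mem_range.1 hj)
    _ = (-1) ^ (m - 1) * U.eval a := by
        rw [eval_eq_sum_mul_oddLagrangeWeight hinj hv0 (Chebyshev.eval_U_two_mul_sub_one_neg m)
          (by simpa using hUdeg) a, mul_sum]
        simp_rw [mul_assoc]
        rfl
    _ ≤ |U.eval a| := (le_abs_self _).trans (by rw [abs_mul, abs_neg_one_pow, one_mul])

theorem pellian_ge_chebyshev_of_even (P : Polynomial ℂ) (hP : Pellian P)
    (d : ℕ) (hdeg : P.natDegree = d) (heven : Even d) (hd1 : 1 ≤ d)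
    (a : ℝ) (ha : a ∈ Set.Icc (0 : ℝ) 1) (ha' : a ≤ Real.sin (Real.pi / (2 * d))) :
    |(Polynomial.Chebyshev.T ℝ d).eval a| ≤ ‖P.eval (a : ℂ)‖ := by
  obtain ⟨Q, hPQ⟩ := hP
  obtain ⟨m, rfl⟩ := heven
  have hQ : IsOddPoly Q := hPQ.isOddPoly_right (hdeg ▸ ⟨m, rfl⟩) (by omega)
  have hQdeg : Q.natDegree < 2 * m := by have := hPQ.natDegree_lt (by omega); omega
  have hbound : ∀ x ∈ Set.Icc (-1 : ℝ) 1, (1 - x ^ 2) * ‖Q.eval (x : ℂ)‖ ^ 2 ≤ 1 :=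
    fun x hx => by linarith [hPQ.2 x hx, sq_nonneg ‖P.eval (x : ℂ)‖]
  have hQa : ‖Q.eval (a : ℂ)‖ ≤ |(Chebyshev.U ℝ (2 * m - 1)).eval a| :=
    norm_eval_le_abs_eval_U_of_isOddPoly hQ hQdeg hbound ha.1
      (by convert ha' using 3; push_cast; ring)
  have hTU := Chebyshev.eval_T_sq_add_one_sub_sq_mul_eval_U_sq ((m + m : ℕ) : ℤ)
    (x := a) ⟨by linarith [ha.1], ha.2⟩
  rw [show ((m + m : ℕ) : ℤ) - 1 = 2 * m - 1 by push_cast; ring] at hTU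
  have hPa := hPQ.2 a ⟨by linarith [ha.1], ha.2⟩
  have h1a : 0 ≤ 1 - a ^ 2 := by nlinarith [ha.1, ha.2]
  refine abs_le_of_sq_le_sq ?_ (norm_nonneg _)
  nlinarith [mul_le_mul_of_nonneg_left (pow_le_pow_left₀ (norm_nonneg _) hQa 2) h1a,
    sq_abs ((Chebyshev.U ℝ (2 * m - 1)).eval a)]
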